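/- Let h > 0, let w be a continuous function, let 0 < a < b and c, d ∈ ℝ with |c − w(a)| ≤ h/2, |d − w(b)| ≤ h/2, let C : ℝ → ℝ be strictly convex, and let U be the unique minimizer of ∫_a^b C(φ'(t)) dt over absolutely continuous φ on [a,b] with φ(a) = c, φ(b) = d and ‖w − φ‖_{∞,[a,b]} ≤ h/2. If u ∈ L¹([a,b]) denotes the a.e. derivative of U, then u is of locally bounded variation on (a,b): for every subinterval (s,t) with a < s < t < b, the total variation of u on (s,t) is finite. -/

import Mathlib

/-!
Where the minimizer `U` stays above the lower obstacle `w - h/2` it is convex: if `U` rose above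
one of its chords, take a maximal subinterval on which it does so; the chord of `U` over that
subinterval still lies in the tube, and by Jensen's inequality replacing `U` by it does not increase
the energy, so uniqueness forces `U` to be that chord, a contradiction. Symmetrically `U` is concave
where it stays below the upper obstacle. By uniform continuity of `w` and `U`, every short enough
interval is of one of the two kinds, so the right derivative of `U` is monotone on short intervals,
hence of bounded variation on compact subintervals of `(a, b)`; by the Lebesgue differentiation
theorem it agrees a.e. with `u`.

Jensen's inequality needs `C ∘ u` to be integrable, and uniqueness forces this too: otherwise the
energy of `u` is the junk value `0`, and adding to `U` a small bump supported away from where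
`C ∘ u` fails to be integrable gives a different admissible function with the same energy.
-/

open MeasureTheory Set Filter

noncomputable section

/-- `φ` is absolutely continuous on `[a, b]` with a.e. derivative `g`. -/
def IsACDeriv (a b : ℝ) (φ g : ℝ → ℝ) : Prop :=
  MeasureTheory.IntegrableOn g (Set.Icc a b) ∧
    ∀ x ∈ Set.Icc a b, φ x = φ a + ∫ t in a..x, g t

/-- `φ` stays within distance `h/2` of `w` on `[a, b]`. -/
def InTube (a b h : ℝ) (w φ : ℝ → ℝ) : Prop :=
  ∀ x ∈ Set.Icc a b, |w x - φ x| ≤ h / 2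

/-- Admissible function (with derivative `g`) for the free-boundary problem. -/
def AdmissibleFree (a b h : ℝ) (w φ g : ℝ → ℝ) : Prop :=
  IsACDeriv a b φ g ∧ InTube a b h w φ

/-- Admissible function for the problem with boundary conditions `φ a = c`, `φ b = d`. -/
def AdmissibleBC (a b h c d : ℝ) (w φ g : ℝ → ℝ) : Prop :=
  AdmissibleFree a b h w φ g ∧ φ a = c ∧ φ b = d

/-- The `C`-energy of a function with derivative `g` on `[a, b]`. -/
def energy (a b : ℝ) (C g : ℝ → ℝ) : ℝ := ∫ u in a..b, C (g u)

/-- `(φ, g)` is the unique minimizer (unique as a function on `[a,b]`) of the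
`C`-energy over the free-boundary admissible class. -/
def IsUniqueMinFree (a b h : ℝ) (w C φ g : ℝ → ℝ) : Prop :=
  AdmissibleFree a b h w φ g ∧
  (∀ ψ k, AdmissibleFree a b h w ψ k → energy a b C g ≤ energy a b C k) ∧
  (∀ ψ k, AdmissibleFree a b h w ψ k → energy a b C k ≤ energy a b C g →
    Set.EqOn ψ φ (Set.Icc a b))

/-- `(φ, g)` is the unique minimizer of the `C`-energy over the admissible class
with boundary conditions `φ a = c`, `φ b = d`. -/
def IsUniqueMinBC (a b h c d : ℝ) (w C φ g : ℝ → ℝ) : Prop :=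
  AdmissibleBC a b h c d w φ g ∧
  (∀ ψ k, AdmissibleBC a b h c d w ψ k → energy a b C g ≤ energy a b C k) ∧
  (∀ ψ k, AdmissibleBC a b h c d w ψ k → energy a b C k ≤ energy a b C g →
    Set.EqOn ψ φ (Set.Icc a b))

/-- `(φ, g)` is the taut string associated with `w` on `[0, T]`:
the unique minimizer of the quadratic energy among absolutely continuous functions
staying in the tube of width `h` around `w`, with `φ 0 = w 0` and `φ T = w T`. -/
def IsTautString (T h : ℝ) (w φ g : ℝ → ℝ) : Prop :=
  IsUniqueMinBC 0 T h (w 0) (w T) w (fun x => x ^ 2) φ g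

open scoped Topology

def chord (f : ℝ → ℝ) (α β : ℝ) (ξ : ℝ) : ℝ := f α + slope f α β * (ξ - α)

section Chord

variable {f g : ℝ → ℝ} {α β ξ : ℝ}

@[simp] theorem chord_left : chord f α β α = f α := by simp [chord]

theorem chord_right (hαβ : α ≠ β) : chord f α β β = f β := by
  rw [chord, slope_def_field, div_mul_cancel₀ _ (sub_ne_zero.2 hαβ.symm)]
  ring

theorem chord_eq_div (hαβ : α < β) :
    chord f α β ξ = ((β - ξ) * f α + (ξ - α) * f β) / (β - α) := by
  rw [chord, slope_def_field]
  field_simp [(sub_pos.2 hαβ).ne']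
  ring

theorem chord_le_chord (hαβ : α < β) (hα : f α ≤ g α) (hβ : f β ≤ g β) (hξ : ξ ∈ Icc α β) :
    chord f α β ξ ≤ chord g α β ξ := by
  rw [chord_eq_div hαβ, chord_eq_div hαβ]
  have := sub_nonneg.2 hξ.1
  have := sub_nonneg.2 hξ.2
  gcongr

theorem min_le_chord (hαβ : α < β) (hξ : ξ ∈ Icc α β) : min (f α) (f β) ≤ chord f α β ξ := by
  rw [chord_eq_div hαβ, le_div_iff₀ (sub_pos.2 hαβ)]
  nlinarith [min_le_left (f α) (f β), min_le_right (f α) (f β), sub_nonneg.2 hξ.1,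
    sub_nonneg.2 hξ.2]

theorem chord_chord {x z : ℝ} (hαβ : α ≠ β) : chord (chord f x z) α β = chord f x z := by
  funext ξ
  simp only [chord, slope_def_field]
  field_simp [sub_ne_zero.2 hαβ.symm]
  ring

theorem continuous_chord : Continuous (chord f α β) := by
  unfold chord
  fun_prop

end Chord

theorem convexOn_of_le_chord {f : ℝ → ℝ} {s : Set ℝ} (hs : Convex ℝ s)
    (hf : ∀ x ∈ s, ∀ z ∈ s, ∀ y ∈ Ioo x z, f y ≤ chord f x z y) : ConvexOn ℝ s f := by
  refine convexOn_of_slope_mono_adjacent hs fun {x y z} hx hz hxy hyz => ?_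
  have hle := hf x hx z hz y ⟨hxy, hyz⟩
  rw [chord, slope_def_field] at hle
  set m := (f z - f x) / (z - x)
  have hmzx : m * (z - x) = f z - f x := div_mul_cancel₀ _ (sub_pos.2 (hxy.trans hyz)).ne'
  calc (f y - f x) / (y - x) ≤ m := by rw [div_le_iff₀ (sub_pos.2 hxy)]; linarith
    _ ≤ (f z - f y) / (z - y) := by rw [le_div_iff₀ (sub_pos.2 hyz)]; linarith

theorem exists_Ioo_pos_of_continuousOn {g : ℝ → ℝ} {x y z : ℝ} (hg : ContinuousOn g (Icc x z))
    (hx : g x ≤ 0) (hz : g z ≤ 0) (hxy : x ≤ y) (hyz : y ≤ z) (hy : 0 < g y) :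
    ∃ α β, x ≤ α ∧ α < y ∧ y < β ∧ β ≤ z ∧ g α ≤ 0 ∧ g β ≤ 0 ∧ ∀ ξ ∈ Ioo α β, 0 < g ξ := by
  let L := Icc x y ∩ {ξ | g ξ ≤ 0}
  let R := Icc y z ∩ {ξ | g ξ ≤ 0}
  have hL : IsClosed L := (hg.mono (Icc_subset_Icc_right hyz)).preimage_isClosed_of_isClosed
    isClosed_Icc isClosed_Iic
  have hR : IsClosed R := (hg.mono (Icc_subset_Icc_left hxy)).preimage_isClosed_of_isClosed
    isClosed_Icc isClosed_Iic
  have hLne : L.Nonempty := ⟨x, ⟨le_rfl, hxy⟩, hx⟩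
  have hRne : R.Nonempty := ⟨z, ⟨hyz, le_rfl⟩, hz⟩
  have hLbdd : BddAbove L := ⟨y, fun ξ hξ => hξ.1.2⟩
  have hRbdd : BddBelow R := ⟨y, fun ξ hξ => hξ.1.1⟩
  obtain ⟨⟨hxα, hαy⟩, hα⟩ := hL.csSup_mem hLne hLbdd
  obtain ⟨⟨hyβ, hβz⟩, hβ⟩ := hR.csInf_mem hRne hRbdd
  refine ⟨sSup L, sInf R, hxα, hαy.lt_of_ne ?_, hyβ.lt_of_ne ?_, hβz, hα, hβ, fun ξ hξ => ?_⟩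
  · exact fun h => (h ▸ hα).not_gt hy
  · exact fun h => (h ▸ hβ).not_gt hy
  by_contra! hξ0
  rcases le_total ξ y with hξy | hyξ
  · exact hξ.1.not_ge (le_csSup hLbdd ⟨⟨hxα.trans hξ.1.le, hξy⟩, hξ0⟩)
  · exact hξ.2.not_ge (csInf_le hRbdd ⟨⟨hyξ, hξ.2.le.trans hβz⟩, hξ0⟩)

theorem eVariationOn_neg {f : ℝ → ℝ} {s : Set ℝ} : eVariationOn (-f) s = eVariationOn f s := by
  simp only [eVariationOn, Pi.neg_apply, edist_neg_neg]

theorem ConvexOn.boundedVariationOn_rightDeriv {f : ℝ → ℝ} {S : Set ℝ} (hf : ConvexOn ℝ S f)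
    {x y : ℝ} (hxy : x ≤ y) (hS : Icc x y ⊆ interior S) :
    BoundedVariationOn (fun ξ => derivWithin f (Ioi ξ) ξ) (Icc x y) := by
  simpa using ((hf.monotoneOn_rightDeriv).mono hS).locallyBoundedVariationOn x y
    (left_mem_Icc.2 hxy) (right_mem_Icc.2 hxy)

theorem ConcaveOn.boundedVariationOn_rightDeriv {f : ℝ → ℝ} {S : Set ℝ} (hf : ConcaveOn ℝ S f)
    {x y : ℝ} (hxy : x ≤ y) (hS : Icc x y ⊆ interior S) :
    BoundedVariationOn (fun ξ => derivWithin f (Ioi ξ) ξ) (Icc x y) := by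
  have := (neg_convexOn_iff.2 hf).boundedVariationOn_rightDeriv hxy hS
  simp only [derivWithin.neg] at this
  rwa [BoundedVariationOn, ← eVariationOn_neg]

theorem boundedVariationOn_Icc_of_forall_sub_le {f : ℝ → ℝ} {s t δ : ℝ} (hst : s ≤ t) (hδ : 0 < δ)
    (hf : ∀ x y, s ≤ x → x ≤ y → y ≤ t → y - x ≤ δ → BoundedVariationOn f (Icc x y)) :
    BoundedVariationOn f (Icc s t) := by
  obtain ⟨n, hn⟩ := exists_nat_gt ((t - s) / δ)
  have hn0 : (0 : ℝ) < n := lt_of_le_of_lt (div_nonneg (sub_nonneg.2 hst) hδ.le) hn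
  set I : ℕ → ℝ := fun i => s + i * ((t - s) / n)
  have hstep : 0 ≤ (t - s) / n := div_nonneg (sub_nonneg.2 hst) hn0.le
  have hI : Monotone I := fun i j hij => by
    simp only [I]; gcongr
  have hIn : I n = t := by simp only [I]; field_simp; ring
  rw [BoundedVariationOn, ← show I 0 = s by simp [I], ← hIn, ← eVariationOn.sum' f hI]
  refine (ENNReal.sum_lt_top.2 fun i hi => (hf _ _ ?_ (hI (Nat.le_succ i)) ?_ ?_).lt_top).ne
  · simpa [I] using mul_nonneg (Nat.cast_nonneg i) hstep
  · rw [← hIn]; exact hI (Finset.mem_range.1 hi)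
  · have : I (i + 1) - I i = (t - s) / n := by simp only [I]; push_cast; ring
    rw [this, div_le_iff₀ hn0]
    rw [div_lt_iff₀ hδ] at hn
    linarith

theorem intervalIntegral_piecewise_Ioc {a b α β : ℝ} {F G : ℝ → ℝ} (hα : a ≤ α) (hαβ : α ≤ β)
    (hβ : β ≤ b) (hG : IntegrableOn G (Icc a b)) (hF : IntegrableOn F (Icc α β)) :
    ∫ t in a..b, (Ioc α β).piecewise F G t =
      (∫ t in a..b, G t) - (∫ t in α..β, G t) + ∫ t in α..β, F t := by
  classical
  have hab : a ≤ b := hα.trans (hαβ.trans hβ)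
  have hG' : IntegrableOn G (Icc α β) := hG.mono_set (Icc_subset_Icc hα hβ)
  have hind : IntegrableOn ((Ioc α β).indicator (F - G)) (Icc a b) :=
    ((hF.sub hG').mono_set Ioc_subset_Icc_self).integrable_indicator measurableSet_Ioc
      |>.integrableOn
  have hpw : ∀ t, (Ioc α β).piecewise F G t = G t + (Ioc α β).indicator (F - G) t := fun t => by
    by_cases ht : t ∈ Ioc α β <;> simp [Set.piecewise, ht]
  calc ∫ t in a..b, (Ioc α β).piecewise F G t
      = (∫ t in a..b, G t) + ∫ t in a..b, (Ioc α β).indicator (F - G) t := by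
        simp_rw [hpw]
        exact intervalIntegral.integral_add
          (hG.mono_set (uIcc_of_le hab).subset).intervalIntegrable
          (hind.mono_set (uIcc_of_le hab).subset).intervalIntegrable
    _ = (∫ t in a..b, G t) + ∫ t in α..β, (F t - G t) := by
        rw [intervalIntegral.integral_of_le (f := (Ioc α β).indicator (F - G)) hab,
          setIntegral_indicator measurableSet_Ioc, inter_eq_right.2 (Ioc_subset_Ioc hα hβ),
          intervalIntegral.integral_of_le hαβ]
        rfl
    _ = (∫ t in a..b, G t) - (∫ t in α..β, G t) + ∫ t in α..β, F t := by
        rw [intervalIntegral.integral_sub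
          (hF.mono_set (uIcc_of_le hαβ).subset).intervalIntegrable
          (hG'.mono_set (uIcc_of_le hαβ).subset).intervalIntegrable]
        ring

theorem exists_not_integrableOn_diff_ball {f : ℝ → ℝ} {a b : ℝ} (hab : a < b)
    (hf : ¬IntegrableOn f (Icc a b)) :
    ∃ x₀ ∈ Ioo a b, ∃ r > 0, ¬IntegrableOn f (Icc a b \ Metric.ball x₀ r) := by
  obtain ⟨m, hm⟩ : ∃ m, m = (a + b) / 2 := ⟨_, rfl⟩
  have hhalves : ¬IntegrableOn f (Icc a m) ∨ ¬IntegrableOn f (Icc m b) := by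
    by_contra! h
    exact hf (Icc_union_Icc_eq_Icc (a := a) (b := m) (c := b) (by linarith) (by linarith) ▸
      h.1.union h.2)
  rcases hhalves with h | h
  · refine ⟨(m + b) / 2, ⟨by linarith, by linarith⟩, (b - m) / 2, by linarith,
      fun hint => h (hint.mono_set fun t ht => ⟨⟨ht.1, ht.2.trans (by linarith)⟩, ?_⟩)⟩
    rw [Real.ball_eq_Ioo]
    exact fun ht' => (ht.2.trans_lt (by linarith [ht'.1])).false
  · refine ⟨(a + m) / 2, ⟨by linarith, by linarith⟩, (m - a) / 2, by linarith,
      fun hint => h (hint.mono_set fun t ht => ⟨⟨(by linarith : a ≤ m).trans ht.1, ht.2⟩, ?_⟩)⟩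
    rw [Real.ball_eq_Ioo]
    exact fun ht' => (ht.1.trans_lt (by linarith [ht'.2])).false

namespace IsACDeriv

variable {a b α β : ℝ} {φ g ψ k : ℝ → ℝ}

theorem intervalIntegrable (hφ : IsACDeriv a b φ g) {x y : ℝ} (hx : x ∈ Icc a b)
    (hy : y ∈ Icc a b) : IntervalIntegrable g volume x y :=
  (hφ.1.mono_set (uIcc_subset_Icc hx hy)).intervalIntegrable

theorem sub_eq_integral (hφ : IsACDeriv a b φ g) {x y : ℝ} (hx : x ∈ Icc a b)
    (hy : y ∈ Icc a b) : φ y - φ x = ∫ t in x..y, g t := by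
  have ha : a ∈ Icc a b := left_mem_Icc.2 (hx.1.trans hx.2)
  rw [hφ.2 y hy, hφ.2 x hx, add_sub_add_left_eq_sub,
    intervalIntegral.integral_interval_sub_left (hφ.intervalIntegrable ha hy)
      (hφ.intervalIntegrable ha hx)]

theorem continuousOn (hφ : IsACDeriv a b φ g) : ContinuousOn φ (Icc a b) := by
  rcases le_or_gt a b with hab | hab
  · have hprim := intervalIntegral.continuousOn_primitive_interval (a := a) (b := b)
      (hφ.1.mono_set (uIcc_of_le hab).subset)
    rw [uIcc_of_le hab] at hprim
    exact (continuousOn_const.add hprim).congr hφ.2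
  · simp [Icc_eq_empty_of_lt hab]

theorem mono (hφ : IsACDeriv a b φ g) (hα : a ≤ α) (hβ : β ≤ b) : IsACDeriv α β φ g :=
  ⟨hφ.1.mono_set (Icc_subset_Icc hα hβ), fun x hx => by
    rw [← hφ.sub_eq_integral ⟨hα, hx.1.trans (hx.2.trans hβ)⟩
      ⟨hα.trans hx.1, hx.2.trans hβ⟩]
    ring⟩

theorem trans (h₁ : IsACDeriv a α φ g) (h₂ : IsACDeriv α b φ g) (hα : a ≤ α) (hαb : α ≤ b) :
    IsACDeriv a b φ g := by
  refine ⟨by simpa [Icc_union_Icc_eq_Icc hα hαb] using h₁.1.union h₂.1, fun x hx => ?_⟩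
  rcases le_total x α with hxα | hαx
  · exact h₁.2 x ⟨hx.1, hxα⟩
  · rw [h₂.2 x ⟨hαx, hx.2⟩, h₁.2 α ⟨hα, le_rfl⟩, add_assoc,
      intervalIntegral.integral_add_adjacent_intervals
        (h₁.intervalIntegrable (left_mem_Icc.2 hα) (right_mem_Icc.2 hα))
        (h₂.intervalIntegrable (left_mem_Icc.2 (hαx.trans hx.2)) ⟨hαx, hx.2⟩)]

theorem congr (hφ : IsACDeriv a b φ g) (hψ : EqOn ψ φ (Icc a b)) (hk : EqOn k g (Ioc a b)) :
    IsACDeriv a b ψ k := by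
  refine ⟨(integrableOn_Icc_iff_integrableOn_Ioc).2
    (((integrableOn_Icc_iff_integrableOn_Ioc).1 hφ.1).congr_fun hk.symm measurableSet_Ioc),
    fun x hx => ?_⟩
  rw [hψ hx, hψ (left_mem_Icc.2 (hx.1.trans hx.2)), hφ.2 x hx,
    intervalIntegral.integral_of_le hx.1, intervalIntegral.integral_of_le hx.1,
    setIntegral_congr_fun measurableSet_Ioc fun t ht => hk ⟨ht.1, ht.2.trans hx.2⟩]

theorem piecewise (hφ : IsACDeriv a b φ g) (hψ : IsACDeriv α β ψ k) (hα : a ≤ α) (hαβ : α ≤ β)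
    (hβ : β ≤ b) (hψα : ψ α = φ α) (hψβ : ψ β = φ β) :
    IsACDeriv a b ((Icc α β).piecewise ψ φ) ((Ioc α β).piecewise k g) := by
  classical
  have left : IsACDeriv a α ((Icc α β).piecewise ψ φ) ((Ioc α β).piecewise k g) :=
    (hφ.mono le_rfl (hαβ.trans hβ)).congr
      (fun x hx => by
        rcases hx.2.lt_or_eq with hxα | rfl
        · simp [Set.piecewise, not_le.2 hxα]
        · simp [Set.piecewise, hαβ, hψα])
      (fun x hx => by simp [Set.piecewise, not_lt.2 hx.2])
  have middle : IsACDeriv α β ((Icc α β).piecewise ψ φ) ((Ioc α β).piecewise k g) :=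
    hψ.congr (fun x hx => by simp [Set.piecewise, hx.1, hx.2])
      (fun x hx => by simp [Set.piecewise, hx.1, hx.2])
  have right : IsACDeriv β b ((Icc α β).piecewise ψ φ) ((Ioc α β).piecewise k g) :=
    (hφ.mono (hα.trans hαβ) le_rfl).congr
      (fun x hx => by
        rcases hx.1.lt_or_eq with hβx | rfl
        · simp [Set.piecewise, not_le.2 hβx]
        · simp [Set.piecewise, hαβ, hψβ])
      (fun x hx => by simp [Set.piecewise, not_le.2 hx.1])
  exact (left.trans middle hα hαβ).trans right (hα.trans hαβ) hβ

theorem add (hφ : IsACDeriv a b φ g) (hψ : IsACDeriv a b ψ k) :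
    IsACDeriv a b (φ + ψ) (g + k) :=
  ⟨hφ.1.add hψ.1, fun x hx => by
    have ha : a ∈ Icc a b := left_mem_Icc.2 (hx.1.trans hx.2)
    rw [Pi.add_apply, Pi.add_apply, hφ.2 x hx, hψ.2 x hx, Pi.add_def,
      intervalIntegral.integral_add (hφ.intervalIntegrable ha hx) (hψ.intervalIntegrable ha hx)]
    ring⟩

theorem neg (hφ : IsACDeriv a b φ g) : IsACDeriv a b (-φ) (-g) :=
  ⟨hφ.1.neg, fun x hx => by
    simp only [Pi.neg_apply, intervalIntegral.integral_neg, hφ.2 x hx]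
    ring⟩

theorem of_contDiff {η : ℝ → ℝ} (hη : ContDiff ℝ 1 η) : IsACDeriv a b η (deriv η) :=
  ⟨(hη.continuous_deriv le_rfl).integrableOn_Icc, fun x _ => by
    rw [intervalIntegral.integral_deriv_eq_sub (fun y _ => hη.differentiable one_ne_zero y)
      ((hη.continuous_deriv le_rfl).intervalIntegrable _ _)]
    ring⟩

theorem ae_hasDerivAt (hφ : IsACDeriv a b φ g) :
    ∀ᵐ x ∂volume.restrict (Icc a b), HasDerivAt φ (g x) x := by
  rw [← Measure.restrict_congr_set Ioo_ae_eq_Icc]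
  rcases le_or_gt a b with hab | hab
  · have hderiv := (hφ.intervalIntegrable (left_mem_Icc.2 hab)
      (right_mem_Icc.2 hab)).ae_hasDerivAt_integral
    filter_upwards [ae_restrict_of_ae hderiv, ae_restrict_mem measurableSet_Ioo] with x hx hxab
    rw [uIcc_of_le hab] at hx
    have hprim := hx (Ioo_subset_Icc_self hxab) a (left_mem_Icc.2 hab)
    refine (hprim.const_add (φ a)).congr_of_eventuallyEq ?_
    filter_upwards [Ioo_mem_nhds hxab.1 hxab.2] with y hy
    exact hφ.2 y (Ioo_subset_Icc_self hy)
  · simp [Ioo_eq_empty_of_le hab.le]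

end IsACDeriv

theorem isACDeriv_chord (f : ℝ → ℝ) (α β : ℝ) :
    IsACDeriv α β (chord f α β) (fun _ => slope f α β) :=
  ⟨integrableOn_const measure_Icc_lt_top.ne, fun x _ => by
    simp only [chord, intervalIntegral.integral_const, smul_eq_mul]
    ring⟩

theorem ConvexOn.map_slope_mul_le {C f φ : ℝ → ℝ} {α β : ℝ} (hC : ConvexOn ℝ univ C)
    (hαβ : α < β) (hφ : IsACDeriv α β f φ) (hCφ : IntegrableOn (fun t => C (φ t)) (Icc α β)) :
    C (slope f α β) * (β - α) ≤ ∫ t in α..β, C (φ t) := by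
  have hslope : slope f α β = ⨍ t in α..β, φ t := by
    rw [interval_average_eq, ← hφ.sub_eq_integral (left_mem_Icc.2 hαβ.le)
      (right_mem_Icc.2 hαβ.le), slope, vsub_eq_sub]
  have hJ := hC.map_set_average_le (μ := volume) (t := uIoc α β) (hC.continuousOn isOpen_univ)
    isClosed_univ (by simp [uIoc_of_le hαβ.le, hαβ]) (by simp [uIoc_of_le hαβ.le])
    (by simp) (hφ.1.mono_set (uIoc_of_le hαβ.le ▸ Ioc_subset_Icc_self))
    (hCφ.mono_set (uIoc_of_le hαβ.le ▸ Ioc_subset_Icc_self))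
  rwa [← hslope, interval_average_eq, smul_eq_mul, inv_mul_eq_div,
    le_div_iff₀ (sub_pos.2 hαβ)] at hJ

section Minimizer

variable {a b h c d : ℝ} {w C U u : ℝ → ℝ}

theorem AdmissibleBC.neg {φ g : ℝ → ℝ} (hφ : AdmissibleBC a b h c d w φ g) :
    AdmissibleBC a b h (-c) (-d) (-w) (-φ) (-g) :=
  ⟨⟨hφ.1.1.neg, fun x hx => by
    rw [Pi.neg_apply, Pi.neg_apply, ← neg_sub', abs_neg]; exact hφ.1.2 x hx⟩,
    by simp [hφ.2.1], by simp [hφ.2.2]⟩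

theorem IsUniqueMinBC.neg (hU : IsUniqueMinBC a b h c d w C U u) :
    IsUniqueMinBC a b h (-c) (-d) (-w) (fun y => C (-y)) (-U) (-u) := by
  have hback : ∀ {ψ k}, AdmissibleBC a b h (-c) (-d) (-w) ψ k →
      AdmissibleBC a b h c d w (-ψ) (-k) := fun hψ => by simpa using hψ.neg
  have henergy : ∀ k, energy a b (fun y => C (-y)) k = energy a b C (-k) := fun _ => rfl
  refine ⟨hU.1.neg, fun ψ k hψ => ?_, fun ψ k hψ hle => ?_⟩
  · simpa [henergy] using hU.2.1 _ _ (hback hψ)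
  · have := hU.2.2 _ _ (hback hψ) (by simpa [henergy] using hle)
    exact fun x hx => by simp [← this hx]

theorem IsUniqueMinBC.eqOn_chord (hC : ConvexOn ℝ univ C) (hU : IsUniqueMinBC a b h c d w C U u)
    (hCu : IntegrableOn (fun t => C (u t)) (Icc a b)) {α β : ℝ} (hα : a ≤ α) (hαβ : α < β)
    (hβ : β ≤ b) (htube : InTube α β h w (chord U α β)) : EqOn U (chord U α β) (Icc α β) := by
  classical
  set ψ := (Icc α β).piecewise (chord U α β) U
  set k := (Ioc α β).piecewise (fun _ => slope U α β) u
  have hψ_out : ∀ x ∉ Ioo α β, ψ x = U x := fun x hx => by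
    by_cases hxαβ : x ∈ Icc α β
    · obtain rfl | rfl : x = α ∨ x = β := by
        by_contra! hne
        exact hx ⟨hxαβ.1.lt_of_ne hne.1.symm, hxαβ.2.lt_of_ne hne.2⟩
      · simp [ψ, hxαβ]
      · simp [ψ, hxαβ, chord_right hαβ.ne]
    · simp [ψ, hxαβ]
  have hadm : AdmissibleBC a b h c d w ψ k := by
    refine ⟨⟨hU.1.1.1.piecewise (isACDeriv_chord U α β) hα hαβ.le hβ chord_left
      (chord_right hαβ.ne), fun x hx => ?_⟩, ?_, ?_⟩
    · by_cases hxαβ : x ∈ Icc α β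
      · simpa [ψ, hxαβ] using htube x hxαβ
      · simpa [ψ, hxαβ] using hU.1.1.2 x hx
    · rw [hψ_out a fun hx => (hα.trans_lt hx.1).false, hU.1.2.1]
    · rw [hψ_out b fun hx => (hx.2.trans_le hβ).false, hU.1.2.2]
  have henergy : energy a b C k ≤ energy a b C u := by
    have hCk : (fun t => C (k t)) = (Ioc α β).piecewise (fun _ => C (slope U α β))
        (fun t => C (u t)) := by
      funext t
      by_cases ht : t ∈ Ioc α β <;> simp [k, ht]
    have hJensen := hC.map_slope_mul_le hαβ (hU.1.1.1.mono hα hβ)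
      (hCu.mono_set (Icc_subset_Icc hα hβ))
    rw [energy, energy, hCk, intervalIntegral_piecewise_Ioc hα hαβ.le hβ hCu
      (integrableOn_const measure_Icc_lt_top.ne), intervalIntegral.integral_const, smul_eq_mul]
    linarith
  intro x hx
  have := hU.2.2 ψ k hadm henergy ⟨hα.trans hx.1, hx.2.trans hβ⟩
  simpa [ψ, hx] using this.symm

theorem IsUniqueMinBC.eqOn_zero_of_not_integrableOn (hab : a ≤ b)
    (hU : IsUniqueMinBC a b h c d w C U u) {K : Set ℝ} (hK : MeasurableSet K)
    (hCu : ¬IntegrableOn (fun t => C (u t)) (Icc a b \ K)) {η : ℝ → ℝ} (hη : ContDiff ℝ 1 η)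
    (hηK : tsupport η ⊆ K) (ha : η a = 0) (hb : η b = 0) (htube : InTube a b h w (U + η)) :
    EqOn η 0 (Icc a b) := by
  have hadm : AdmissibleBC a b h c d w (U + η) (u + deriv η) :=
    ⟨⟨hU.1.1.1.add (.of_contDiff hη), htube⟩, by simp [ha, hU.1.2.1], by simp [hb, hU.1.2.2]⟩
  have henergy_zero : ∀ {k : ℝ → ℝ}, ¬IntegrableOn (fun t => C (k t)) (Icc a b \ K) →
      energy a b C k = 0 := fun hk => intervalIntegral.integral_undef fun hint =>
    hk (((integrableOn_Icc_iff_integrableOn_Ioc).2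
      ((intervalIntegrable_iff_integrableOn_Ioc_of_le hab).1 hint)).mono_set sdiff_subset)
  -- off `K` the integrand of the competitor is `C ∘ u`, so both energies are the junk value `0`
  have hk : ¬IntegrableOn (fun t => C ((u + deriv η) t)) (Icc a b \ K) := fun hint =>
    hCu (hint.congr_fun (fun t ht => by
      simp [Function.notMem_support.1 fun h => ht.2 (hηK (support_deriv_subset h))])
      (measurableSet_Icc.diff hK))
  have := hU.2.2 _ _ hadm (by rw [henergy_zero hk, henergy_zero hCu])
  exact fun x hx => by simpa using this hx

theorem IsUniqueMinBC.integrableOn_comp_deriv (hh : 0 < h) (hab : a < b) (hw : Continuous w)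
    (hU : IsUniqueMinBC a b h c d w C U u) : IntegrableOn (fun t => C (u t)) (Icc a b) := by
  by_contra hbad
  obtain ⟨x₀, hx₀, r, hr, hnot⟩ := exists_not_integrableOn_diff_ball hab hbad
  have hcont : ContinuousAt (fun ξ => w ξ - U ξ) x₀ :=
    hw.continuousAt.sub (hU.1.1.1.continuousOn.continuousAt (Icc_mem_nhds hx₀.1 hx₀.2))
  have hnhds : {ξ | dist (w ξ - U ξ) (w x₀ - U x₀) < h / 4} ∩ Metric.ball x₀ r ∩ Ioo a b ∈ 𝓝 x₀ :=
    inter_mem (inter_mem (hcont (Metric.ball_mem_nhds _ (by positivity)))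
      (Metric.ball_mem_nhds x₀ hr)) (Ioo_mem_nhds hx₀.1 hx₀.2)
  obtain ⟨ρ, hρ, hball⟩ := Metric.nhds_basis_closedBall.mem_iff.1 hnhds
  have hρa : ρ ≤ dist a x₀ := not_lt.1 fun ha => (hball ha.le).2.1.false
  have hρb : ρ ≤ dist b x₀ := not_lt.1 fun hb => (hball hb.le).2.2.false
  let bump : ContDiffBump x₀ := ⟨ρ / 2, ρ, half_pos hρ, half_lt_self hρ⟩
  -- push `U` towards `w` near `x₀`, by a quarter of the tube width
  set σ : ℝ := if 0 ≤ w x₀ - U x₀ then h / 4 else -(h / 4)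
  have hσ : σ ≠ 0 := by simp only [σ]; split_ifs <;> linarith
  have htube : InTube a b h w (U + fun x => σ * bump x) := fun ξ hξ => by
    have hU_tube := abs_le.1 (hU.1.1.2 ξ hξ)
    by_cases hξ₀ : dist ξ x₀ < ρ
    · have hθ := mul_nonneg hh.le (bump.nonneg (x := ξ))
      have hθ' := mul_le_of_le_one_right hh.le (bump.le_one (x := ξ))
      have hnear : dist (w ξ - U ξ) (w x₀ - U x₀) < h / 4 := (hball hξ₀.le).1.1
      rw [Real.dist_eq, abs_lt] at hnear
      simp only [Pi.add_apply, σ]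
      split_ifs <;> exact abs_le.2 ⟨by linarith, by linarith⟩
    · simpa [bump.zero_of_le_dist (not_lt.1 hξ₀)] using hU.1.1.2 ξ hξ
  have hsupp : tsupport (fun x => σ * bump x) ⊆ Metric.ball x₀ r :=
    (tsupport_mul_subset_right).trans (bump.tsupport_eq.trans_subset fun ξ hξ => (hball hξ).1.2)
  have hzero := hU.eqOn_zero_of_not_integrableOn hab.le Metric.isOpen_ball.measurableSet hnot
    (contDiff_const.mul bump.contDiff) hsupp (by simp [bump.zero_of_le_dist hρa])
    (by simp [bump.zero_of_le_dist hρb]) htube (Ioo_subset_Icc_self hx₀)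
  have hbump : bump x₀ = 1 :=
    bump.one_of_mem_closedBall (Metric.mem_closedBall_self (half_pos hρ).le)
  exact hσ (by simpa [hbump] using hzero)

theorem IsUniqueMinBC.convexOn_Icc (hC : ConvexOn ℝ univ C)
    (hU : IsUniqueMinBC a b h c d w C U u) (hCu : IntegrableOn (fun t => C (u t)) (Icc a b))
    {p q : ℝ} (hp : a ≤ p) (hq : q ≤ b) (hfloor : ∀ x ∈ Icc p q, ∀ y ∈ Icc p q, w x - h / 2 ≤ U y) :
    ConvexOn ℝ (Icc p q) U := by
  refine convexOn_of_le_chord (convex_Icc p q) fun x hx z hz y hy => ?_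
  by_contra! hy_above
  have hxz : x < z := hy.1.trans hy.2
  have hcont : ContinuousOn (fun ξ => U ξ - chord U x z ξ) (Icc x z) :=
    (hU.1.1.1.continuousOn.mono (Icc_subset_Icc (hp.trans hx.1) (hz.2.trans hq))).sub
      continuous_chord.continuousOn
  obtain ⟨α, β, hxα, hαy, hyβ, hβz, hα, hβ, habove⟩ := exists_Ioo_pos_of_continuousOn hcont
    (by simp) (by simp [chord_right hxz.ne]) hy.1.le hy.2.le (sub_pos.2 hy_above)
  have hαβ : α < β := hαy.trans hyβ
  have hsub : Icc α β ⊆ Icc p q := Icc_subset_Icc (hx.1.trans hxα) (hβz.trans hz.2)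
  have hbelow : ∀ ξ ∈ Icc α β, chord U α β ξ ≤ chord U x z ξ := fun ξ hξ => by
    have := chord_le_chord (g := chord U x z) hαβ (sub_nonpos.1 hα) (sub_nonpos.1 hβ) hξ
    rwa [chord_chord hαβ.ne] at this
  have hbelow_U : ∀ ξ ∈ Icc α β, chord U α β ξ ≤ U ξ := fun ξ hξ => by
    rcases hξ.1.eq_or_lt with rfl | hαξ
    · simp
    rcases hξ.2.eq_or_lt with rfl | hξβ
    · simp [chord_right hαβ.ne]
    linarith [hbelow ξ hξ, habove ξ ⟨hαξ, hξβ⟩]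
  have htube : InTube α β h w (chord U α β) := fun ξ hξ => by
    have hceil := (abs_le.1 (hU.1.1.2 ξ ⟨hp.trans (hsub hξ).1, (hsub hξ).2.trans hq⟩)).1
    have hmin := min_le_chord (f := U) hαβ hξ
    have hfloor_α := hfloor ξ (hsub hξ) α (hsub (left_mem_Icc.2 hαβ.le))
    have hfloor_β := hfloor ξ (hsub hξ) β (hsub (right_mem_Icc.2 hαβ.le))
    refine abs_le.2 ⟨by linarith [hbelow_U ξ hξ], ?_⟩
    rcases min_cases (U α) (U β) with ⟨hm, -⟩ | ⟨hm, -⟩ <;> linarith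
  have hUy := hU.eqOn_chord hC hCu (hp.trans (hsub (left_mem_Icc.2 hαβ.le)).1) hαβ
    ((hsub (right_mem_Icc.2 hαβ.le)).2.trans hq) htube ⟨hαy.le, hyβ.le⟩
  linarith [hbelow y ⟨hαy.le, hyβ.le⟩, habove y ⟨hαy, hyβ⟩]

theorem IsUniqueMinBC.concaveOn_Icc (hC : ConvexOn ℝ univ C)
    (hU : IsUniqueMinBC a b h c d w C U u) (hCu : IntegrableOn (fun t => C (u t)) (Icc a b))
    {p q : ℝ} (hp : a ≤ p) (hq : q ≤ b) (hceil : ∀ x ∈ Icc p q, ∀ y ∈ Icc p q, U y ≤ w x + h / 2) :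
    ConcaveOn ℝ (Icc p q) U := by
  have hCneg : ConvexOn ℝ univ (fun y => C (-y)) := hC.comp_linearMap (-LinearMap.id)
  refine neg_convexOn_iff.1
    (hU.neg.convexOn_Icc hCneg (by simpa using hCu) hp hq fun x hx y hy => ?_)
  simp only [Pi.neg_apply]
  linarith [hceil x hx y hy]

theorem IsUniqueMinBC.exists_convexOn_or_concaveOn (hh : 0 < h) (hw : Continuous w)
    (hC : ConvexOn ℝ univ C) (hU : IsUniqueMinBC a b h c d w C U u)
    (hCu : IntegrableOn (fun t => C (u t)) (Icc a b)) :
    ∃ δ > 0, ∀ p q, a ≤ p → q ≤ b → q - p ≤ δ →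
      ConvexOn ℝ (Icc p q) U ∨ ConcaveOn ℝ (Icc p q) U := by
  obtain ⟨δw, hδw, hw_osc⟩ := Metric.uniformContinuousOn_iff_le.1
    (isCompact_Icc.uniformContinuousOn_of_continuous hw.continuousOn) (h / 2) (half_pos hh)
  obtain ⟨δU, hδU, hU_osc⟩ := Metric.uniformContinuousOn_iff_le.1
    (isCompact_Icc.uniformContinuousOn_of_continuous hU.1.1.1.continuousOn) (h / 2) (half_pos hh)
  refine ⟨min δw δU, lt_min hδw hδU, fun p q hp hq hpq => ?_⟩
  have hsub : Icc p q ⊆ Icc a b := Icc_subset_Icc hp hq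
  have hdist : ∀ x ∈ Icc p q, ∀ y ∈ Icc p q, dist x y ≤ min δw δU := fun x hx y hy =>
    (Real.dist_le_of_mem_Icc hx hy).trans hpq
  by_cases hfloor : ∀ x ∈ Icc p q, ∀ y ∈ Icc p q, w x - h / 2 ≤ U y
  · exact .inl (hU.convexOn_Icc hC hCu hp hq hfloor)
  -- if `U` dips below the floor at one point, the oscillation bounds keep it off the ceiling
  push Not at hfloor
  obtain ⟨x₀, hx₀, y₀, hy₀, hdip⟩ := hfloor
  refine .inr (hU.concaveOn_Icc hC hCu hp hq fun x hx y hy => ?_)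
  have hw_close := hw_osc x₀ (hsub hx₀) x (hsub hx)
    ((hdist x₀ hx₀ x hx).trans (min_le_left _ _))
  have hU_close := hU_osc y (hsub hy) y₀ (hsub hy₀) ((hdist y hy y₀ hy₀).trans (min_le_right _ _))
  rw [Real.dist_eq] at hw_close hU_close
  linarith [(abs_le.1 hw_close).2, (abs_le.1 hU_close).2]

theorem IsUniqueMinBC.boundedVariationOn_rightDeriv (hh : 0 < h) (hw : Continuous w)
    (hC : ConvexOn ℝ univ C) (hU : IsUniqueMinBC a b h c d w C U u)
    (hCu : IntegrableOn (fun t => C (u t)) (Icc a b)) {s t : ℝ} (hs : a < s) (hst : s ≤ t)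
    (ht : t < b) : BoundedVariationOn (fun x => derivWithin U (Ioi x) x) (Icc s t) := by
  obtain ⟨δ, hδ, hpieces⟩ := hU.exists_convexOn_or_concaveOn hh hw hC hCu
  set ε := min (δ / 3) (min (s - a) (b - t))
  have hε : 0 < ε := lt_min (by positivity) (lt_min (by linarith) (by linarith))
  have hεδ : ε ≤ δ / 3 := min_le_left _ _
  have hεs : ε ≤ s - a := (min_le_right _ _).trans (min_le_left _ _)
  have hεt : ε ≤ b - t := (min_le_right _ _).trans (min_le_right _ _)
  refine boundedVariationOn_Icc_of_forall_sub_le hst hε fun x y hx hxy hy hyx => ?_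
  have hinterior : Icc x y ⊆ interior (Icc (x - ε) (y + ε)) := by
    rw [interior_Icc]
    exact Icc_subset_Ioo (by linarith) (by linarith)
  rcases hpieces (x - ε) (y + ε) (by linarith) (by linarith) (by linarith) with hU' | hU'
  · exact hU'.boundedVariationOn_rightDeriv hxy hinterior
  · exact hU'.boundedVariationOn_rightDeriv hxy hinterior

end Minimizer

theorem minimizer_deriv_locally_bounded_variation_general
    (h : ℝ) (hh : 0 < h) (w : ℝ → ℝ) (hw : Continuous w)
    (a b : ℝ) (hab : a < b) (c d : ℝ)
    (C : ℝ → ℝ) (hC : StrictConvexOn ℝ Set.univ C)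
    (U u : ℝ → ℝ) (hU : IsUniqueMinBC a b h c d w C U u) :
    ∃ v : ℝ → ℝ,
      (∀ᵐ x ∂(volume.restrict (Set.Icc a b)), v x = u x) ∧
      ∀ s t : ℝ, a < s → s < t → t < b → BoundedVariationOn v (Set.Ioo s t) := by
  have hCu := hU.integrableOn_comp_deriv hh hab hw
  refine ⟨fun x => derivWithin U (Ioi x) x, ?_, fun s t hs hst ht => ?_⟩
  · filter_upwards [hU.1.1.1.ae_hasDerivAt] with x hx
    exact hx.hasDerivWithinAt.derivWithin (uniqueDiffWithinAt_Ioi x)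
  · exact (hU.boundedVariationOn_rightDeriv hh hw hC.convexOn hCu hs hst.le ht).mono
      Ioo_subset_Icc_self

/-- **Lemma A.3.** The derivative `u` of the unique minimizer `U` is (as an element
of `L¹`, i.e. up to a.e. equality) of locally bounded variation on `(a, b)`. -/
theorem minimizer_deriv_locally_bounded_variation
    (h : ℝ) (hh : 0 < h) (w : ℝ → ℝ) (hw : Continuous w)
    (a b : ℝ) (ha : 0 < a) (hab : a < b) (c d : ℝ)
    (hc : |c - w a| ≤ h / 2) (hd : |d - w b| ≤ h / 2)
    (C : ℝ → ℝ) (hC : StrictConvexOn ℝ Set.univ C)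
    (U u : ℝ → ℝ) (hU : IsUniqueMinBC a b h c d w C U u) :
    ∃ v : ℝ → ℝ,
      (∀ᵐ x ∂(volume.restrict (Set.Icc a b)), v x = u x) ∧
      ∀ s t : ℝ, a < s → s < t → t < b → BoundedVariationOn v (Set.Ioo s t) :=
  minimizer_deriv_locally_bounded_variation_general h hh w hw a b hab c d C hC U u hU
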